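/- For every nonmeager semifilter 𝓕 on ω, the bounding number 𝔟(𝓕) — the least cardinality of a subset of ℕ^ω unbounded with respect to the relation x ≤_𝓕 y iff {n : x(n) ≤ y(n)} ∈ 𝓕 — is at least 𝔤. -/

import Mathlib

open Cardinal

/-- Characteristic-function embedding of `𝒫(ω)` into Cantor space `2^ω`. -/
noncomputable def chi (s : Set ℕ) : ℕ → Bool :=
  fun n => @decide (n ∈ s) (Classical.propDecidable _)

/-- A groupwise dense family on `ω`. -/
def GroupwiseDense (D : Set (Set ℕ)) : Prop :=
  (∀ A ∈ D, A.Infinite) ∧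
  (∀ A ∈ D, ∀ B : Set ℕ, B.Infinite → (B \ A).Finite → B ∈ D) ∧
  ∀ I : ℕ → Finset ℕ, (∀ n, (I n).Nonempty) → (∀ m n, m ≠ n → Disjoint (I m) (I n)) →
    ∃ H : Set ℕ, H.Infinite ∧ (⋃ n ∈ H, (I n : Set ℕ)) ∈ D

/-- The groupwise density number `𝔤`. -/
noncomputable def gNum : Cardinal :=
  sInf {c : Cardinal | ∃ G : Set (Set (Set ℕ)),
    (∀ D ∈ G, GroupwiseDense D) ∧ ⋂₀ G = ∅ ∧ c = #G}

/-- A semifilter on `ω` (containing the Fréchet filter). -/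
def IsSemifilter (F : Set (Set ℕ)) : Prop :=
  (∀ A ∈ F, A.Infinite) ∧
  (∀ A ∈ F, ∀ B : Set ℕ, (A \ B).Finite → B ∈ F) ∧
  ∀ A : Set ℕ, Aᶜ.Finite → A ∈ F

/-! ### Auxiliary definitions -/

/-- The least element of `A` strictly above `n`. -/
noncomputable def nuF (A : Set ℕ) (n : ℕ) : ℕ := sInf {a | a ∈ A ∧ n < a}

lemma nuF_spec {A : Set ℕ} (hA : A.Infinite) (n : ℕ) : nuF A n ∈ A ∧ n < nuF A n := by
  obtain ⟨b, hb, hnb⟩ := hA.exists_gt n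
  exact Nat.sInf_mem (⟨b, hb, hnb⟩ : {a | a ∈ A ∧ n < a}.Nonempty)

lemma nuF_le {A : Set ℕ} {n b : ℕ} (hb : b ∈ A) (hnb : n < b) : nuF A n ≤ b :=
  Nat.sInf_le ⟨hb, hnb⟩

/-- The groupwise dense set associated to a function `x`. -/
def Dx (F : Set (Set ℕ)) (x : ℕ → ℕ) : Set (Set ℕ) :=
  {A | A.Infinite ∧ {n | x n ≤ nuF A n} ∈ F}

/-- Blocks of a strictly monotone `m` are disjoint. -/
lemma block_eq {m : ℕ → ℕ} (hm : StrictMono m) {a b i : ℕ}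
    (h1 : m a ≤ i) (h2 : i < m (a + 1)) (h3 : m b ≤ i) (h4 : i < m (b + 1)) : a = b := by
  rcases lt_trichotomy a b with h | h | h
  · have hab : a + 1 ≤ b := h
    exact absurd (lt_of_le_of_lt (le_trans (hm.le_iff_le.mpr hab) h3) h2) (lt_irrefl _)
  · exact h
  · have hba : b + 1 ≤ a := h
    exact absurd (lt_of_le_of_lt (le_trans (hm.le_iff_le.mpr hba) h1) h4) (lt_irrefl _)

/-- Key consequence of nonmeagerness: for every interval partition there is a
member of `F` missing infinitely many intervals. -/
lemma key_nonmeager (F : Set (Set ℕ)) (hnm : ¬ IsMeagre (chi '' F))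
    {m : ℕ → ℕ} (hm : StrictMono m) :
    ∃ S ∈ F, {r | ∀ i, m r ≤ i → i < m (r + 1) → i ∉ S}.Infinite := by
  by_contra hcon
  push_neg at hcon
  apply hnm
  set C : ℕ → Set (ℕ → Bool) :=
    fun N => {f | ∀ r, N ≤ r → ∃ i, m r ≤ i ∧ i < m (r + 1) ∧ f i = true} with hC
  have hsub : chi '' F ⊆ ⋃ N, C N := by
    rintro _ ⟨S, hS, rfl⟩
    have hfin := hcon S hS
    obtain ⟨N, hN⟩ := hfin.bddAbove
    refine Set.mem_iUnion.mpr ⟨N + 1, fun r hr => ?_⟩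
    have hrn : r ∉ {r | ∀ i, m r ≤ i → i < m (r + 1) → i ∉ S} := by
      intro hmem
      exact absurd (hN hmem) (by omega)
    simp only [Set.mem_setOf_eq] at hrn
    push_neg at hrn
    obtain ⟨i, h1, h2, h3⟩ := hrn
    refine ⟨i, h1, h2, ?_⟩
    simp only [chi, decide_eq_true_eq]
    exact h3
  have hclosed : ∀ N, IsClosed (C N) := by
    intro N
    have : C N = ⋂ r, ⋂ (_ : N ≤ r), ⋃ i ∈ Set.Ico (m r) (m (r + 1)),
        {f : ℕ → Bool | f i = true} := by
      ext f
      simp only [hC, Set.mem_setOf_eq, Set.mem_iInter, Set.mem_iUnion, Set.mem_Ico,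
        Set.mem_setOf_eq]
      constructor
      · intro h r hr
        obtain ⟨i, h1, h2, h3⟩ := h r hr
        exact ⟨i, ⟨h1, h2⟩, h3⟩
      · intro h r hr
        obtain ⟨i, ⟨h1, h2⟩, h3⟩ := h r hr
        exact ⟨i, h1, h2, h3⟩
    rw [this]
    refine isClosed_iInter fun r => isClosed_iInter fun _ => ?_
    refine (Set.finite_Ico _ _).isClosed_biUnion fun i _ => ?_
    have hcl : IsClosed ((fun f : ℕ → Bool => f i) ⁻¹' {true}) :=
      IsClosed.preimage (continuous_apply i) (isClosed_discrete _)
    exact hcl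
  have hint : ∀ N, interior (C N) = ∅ := by
    intro N
    rw [Set.eq_empty_iff_forall_notMem]
    intro f hf
    obtain ⟨I, u, hIu, hpi⟩ := isOpen_pi_iff.mp isOpen_interior f hf
    set g : ℕ → Bool := fun i => if i ∈ I then f i else false with hg
    have hgpi : g ∈ (I : Set ℕ).pi u := by
      intro a ha
      simp only [hg, if_pos (Finset.mem_coe.mp ha)]
      exact (hIu a (Finset.mem_coe.mp ha)).2
    have hgC : g ∈ C N := interior_subset (hpi hgpi)
    set M := I.sup id + 1 with hM
    obtain ⟨i, h1, h2, h3⟩ := hgC (max N M) (le_max_left _ _)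
    have hiM : M ≤ i := le_trans (le_max_right N M) (le_trans hm.le_apply h1)
    have hiI : i ∉ I := by
      intro hi
      have hle : i ≤ I.sup id := Finset.le_sup (f := id) hi
      omega
    rw [hg] at h3
    simp only [if_neg hiI] at h3
    exact Bool.false_ne_true h3
  have hmeagre : ∀ N, IsMeagre (C N) := by
    intro N
    rw [isMeagre_iff_countable_union_isNowhereDense]
    exact ⟨{C N}, by
      rintro t rfl
      exact ((hclosed N).isNowhereDense_iff).mpr (hint N), Set.countable_singleton _,
      by simp⟩
  exact (isMeagre_iUnion hmeagre).mono hsub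

lemma Dx_gwd (F : Set (Set ℕ)) (hF : IsSemifilter F) (hnm : ¬ IsMeagre (chi '' F))
    (x : ℕ → ℕ) : GroupwiseDense (Dx F x) := by
  obtain ⟨hFinf, hFup, hFcof⟩ := hF
  refine ⟨fun A hA => hA.1, ?_, ?_⟩
  · rintro A ⟨hAinf, hAF⟩ B hBinf hBA
    refine ⟨hBinf, ?_⟩
    obtain ⟨N, hN⟩ := hBA.bddAbove
    apply hFup _ hAF
    have hsub : {n | x n ≤ nuF A n} \ Set.Iic N ⊆ {n | x n ≤ nuF B n} := by
      rintro n ⟨hn1, hn2⟩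
      simp only [Set.mem_Iic, not_le] at hn2
      have hBspec := nuF_spec hBinf n
      have hmemA : nuF B n ∈ A := by
        by_contra hc
        have : nuF B n ∈ B \ A := ⟨hBspec.1, hc⟩
        have := hN this
        omega
      exact le_trans hn1 (nuF_le hmemA hBspec.2)
    have : {n | x n ≤ nuF A n} \ {n | x n ≤ nuF B n} ⊆ Set.Iic N := by
      rintro n ⟨hn1, hn2⟩
      by_contra hc
      exact hn2 (hsub ⟨hn1, hc⟩)
    exact (Set.finite_Iic N).subset this
  · intro I hne hdisj
    -- pick an interval entirely above any bound
    have hpick : ∀ b : ℕ, ∃ k, ∀ i ∈ I k, b ≤ i := by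
      intro b
      by_contra hc
      push_neg at hc
      choose φ hφ1 hφ2 using hc
      have hmaps : ∀ k ∈ Finset.range (b + 1), φ k ∈ Finset.range b :=
        fun k _ => Finset.mem_range.mpr (hφ2 k)
      obtain ⟨k1, _, k2, _, hne', heq⟩ :=
        Finset.exists_ne_map_eq_of_card_lt_of_maps_to (by simp) hmaps
      exact (Finset.disjoint_left.mp (hdisj k1 k2 hne') (hφ1 k1)) (heq ▸ hφ1 k2)
    choose pick hpick' using hpick
    -- the interval partition
    obtain ⟨m, hm0, hmsucc⟩ : ∃ m : ℕ → ℕ, m 0 = 0 ∧ ∀ j, m (j + 1) =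
        (Finset.range (m j)).sup x + m j + (I (pick (m j))).sup id + 1 :=
      ⟨fun j => Nat.rec 0
        (fun _ p => (Finset.range p).sup x + p + (I (pick p)).sup id + 1) j,
        rfl, fun _ => rfl⟩
    have hmlt : ∀ j, m j < m (j + 1) := by
      intro j
      have := hmsucc j
      omega
    have hmmono : StrictMono m := strictMono_nat_of_lt_succ hmlt
    have hx : ∀ j n, n < m j → x n < m (j + 1) := by
      intro j n hn
      have h1 : x n ≤ (Finset.range (m j)).sup x := Finset.le_sup (Finset.mem_range.mpr hn)
      have h2 := hmsucc j
      omega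
    have hI1 : ∀ j, ∀ i ∈ I (pick (m j)), m j ≤ i ∧ i < m (j + 1) := by
      intro j i hi
      refine ⟨hpick' (m j) i hi, ?_⟩
      have h1 : i ≤ (I (pick (m j))).sup id := Finset.le_sup (f := id) hi
      have h2 := hmsucc j
      omega
    -- apply nonmeagerness to the doubled partition
    have hm2 : StrictMono (fun r => m (2 * r)) :=
      hmmono.comp (fun a b h => by omega)
    obtain ⟨S, hS, hR0⟩ := key_nonmeager F hnm hm2
    have hR : {r : ℕ | ∀ i, m (2 * r) ≤ i → i < m (2 * (r + 1)) → i ∉ S}.Infinite := hR0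
    set R := {r : ℕ | ∀ i, m (2 * r) ≤ i → i < m (2 * (r + 1)) → i ∉ S} with hRdef
    -- the union
    set H : Set ℕ := (fun r => pick (m (2 * r + 1))) '' R with hH
    set U : Set ℕ := ⋃ k ∈ H, (I k : Set ℕ) with hU
    -- membership of I-intervals in blocks
    have hblocks : ∀ u ∈ U, ∃ r ∈ R, m (2 * r + 1) ≤ u ∧ u < m (2 * r + 1 + 1) := by
      intro u hu
      rw [hU] at hu
      simp only [Set.mem_iUnion] at hu
      obtain ⟨k, hk, hu⟩ := hu
      rw [hH] at hk
      obtain ⟨r, hr, rfl⟩ := hk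
      exact ⟨r, hr, hI1 (2 * r + 1) u hu⟩
    -- injectivity of r ↦ pick (m (2r+1)) on R
    have hinj : Set.InjOn (fun r => pick (m (2 * r + 1))) R := by
      intro r1 _ r2 _ heq
      simp only at heq
      obtain ⟨i, hi⟩ := hne (pick (m (2 * r1 + 1)))
      have h1 := hI1 (2 * r1 + 1) i hi
      have hi2 : i ∈ I (pick (m (2 * r2 + 1))) := by rw [← heq]; exact hi
      have h2 := hI1 (2 * r2 + 1) i hi2
      have := block_eq hmmono h1.1 h1.2 h2.1 h2.2
      omega
    have hHinf : H.Infinite := Set.Infinite.image hinj hR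
    -- U is infinite
    have hUinf : U.Infinite := by
      have he : ∀ r : ℕ, (I (pick (m (2 * r + 1)))).min' (hne _) ∈
          I (pick (m (2 * r + 1))) := fun r => Finset.min'_mem _ _
      set e : ℕ → ℕ := fun r => (I (pick (m (2 * r + 1)))).min' (hne _) with hedef
      have heinj : Set.InjOn e R := by
        intro r1 _ r2 _ heq
        have h1 := hI1 (2 * r1 + 1) (e r1) (he r1)
        have h2 := hI1 (2 * r2 + 1) (e r2) (he r2)
        rw [heq] at h1
        have := block_eq hmmono h1.1 h1.2 h2.1 h2.2
        omega
      have hsub : e '' R ⊆ U := by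
        rintro _ ⟨r, hr, rfl⟩
        rw [hU]
        simp only [Set.mem_iUnion]
        exact ⟨pick (m (2 * r + 1)), ⟨r, hr, rfl⟩, he r⟩
      exact Set.Infinite.mono hsub (Set.Infinite.image heinj hR)
    refine ⟨H, hHinf, hUinf, ?_⟩
    -- S ⊆ {n | x n ≤ nuF U n}
    have hcore : S ⊆ {n | x n ≤ nuF U n} := by
      intro n hnS
      -- the block of n
      set j := Nat.findGreatest (fun j => m j ≤ n) n with hjdef
      have hj1 : m j ≤ n :=
        Nat.findGreatest_spec (P := fun j => m j ≤ n) (Nat.zero_le n)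
          (by show m 0 ≤ n; rw [hm0]; exact Nat.zero_le n)
      have hj2 : n < m (j + 1) := by
        by_contra hc
        push_neg at hc
        have hjn : j + 1 ≤ n := le_trans hmmono.le_apply hc
        have := Nat.le_findGreatest (P := fun j => m j ≤ n) hjn hc
        omega
      have hxn : x n < m (j + 1 + 1) := hx (j + 1) n hj2
      -- every element of U above n is ≥ x n
      have hUabove : ∀ u ∈ U, n < u → x n ≤ u := by
        intro u hu hnu
        by_contra hc
        push_neg at hc
        obtain ⟨r, hrR0, hu1, hu2⟩ := hblocks u hu
        have hrR : ∀ i, m (2 * r) ≤ i → i < m (2 * (r + 1)) → i ∉ S := hrR0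
        have hum : m j ≤ u := le_trans hj1 (le_of_lt hnu)
        have hum2 : u < m (j + 2) := lt_trans hc hxn
        rcases lt_or_ge u (m (j + 1)) with h | h
        · -- u in block j, so 2r+1 = j
          have hjr : 2 * r + 1 = j := block_eq hmmono hu1 hu2 hum h
          have : n ∉ S := hrR n (le_trans (hmmono.le_iff_le.mpr (by omega)) hj1)
            (by rw [(show 2 * (r + 1) = j + 1 by omega)]; exact hj2)
          exact this hnS
        · -- u in block j+1, so 2r+1 = j+1
          have hjr : 2 * r + 1 = j + 1 := block_eq hmmono hu1 hu2 h hum2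
          have : n ∉ S := hrR n (by rw [(show 2 * r = j by omega)]; exact hj1)
            (by
              rw [(show 2 * (r + 1) = j + 2 by omega)]
              exact lt_of_lt_of_le hj2 (hmmono.le_iff_le.mpr (by omega)))
          exact this hnS
      have hspec := nuF_spec hUinf n
      exact hUabove _ hspec.1 hspec.2
    exact hFup S hS _ (by
      rw [Set.diff_eq_empty.mpr hcore]
      exact Set.finite_empty)

/-- For a nonmeager semifilter `𝓕`, every `≤_𝓕`-unbounded family has size at
least `𝔤`; i.e. `𝔟(𝓕) ≥ 𝔤`. -/
theorem stmt15 (F : Set (Set ℕ)) (hF : IsSemifilter F)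
    (hnm : ¬ IsMeagre (chi '' F)) (T : Set (ℕ → ℕ))
    (hT : ∀ y : ℕ → ℕ, ∃ x ∈ T, {n : ℕ | x n ≤ y n} ∉ F) :
    gNum ≤ #T := by
  have h1 : ∀ D ∈ Dx F '' T, GroupwiseDense D := by
    rintro D ⟨x, hx, rfl⟩
    exact Dx_gwd F hF hnm x
  have h2 : ⋂₀ (Dx F '' T) = ∅ := by
    rw [Set.eq_empty_iff_forall_notMem]
    intro A hA
    by_cases hinf : A.Infinite
    · obtain ⟨x, hxT, hxA⟩ := hT (nuF A)
      exact hxA (hA (Dx F x) ⟨x, hxT, rfl⟩).2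
    · obtain ⟨x, hxT, _⟩ := hT (fun _ => 0)
      exact hinf (hA (Dx F x) ⟨x, hxT, rfl⟩).1
  have h3 : gNum ≤ #(Dx F '' T) := csInf_le' ⟨Dx F '' T, h1, h2, rfl⟩
  exact h3.trans Cardinal.mk_image_le
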